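/- arXiv:2404.10719 — 4 statements merged into one kernel-verified Lean document; each statement's English description precedes it below -/
import Mathlib

section
/- With the setting of the previous statement, the infimum of L_DPO over fully supported policies equals the infimum of L_R over all reward functions r : Y → ℝ. -/
/-!
The implicit reward `y ↦ β log (π y / πref y)` maps fully supported policies onto all rewards up
to an additive constant: the normalised Gibbs policy `πref · exp (r / β) / Z` has implicit reward
`r - β log Z`. The reward loss only sees reward differences, so both losses take exactly the same
set of values.
-/

namespace DPO

variable {Y : Type*} [Fintype Y]

noncomputable def implicitReward (πref : Y → ℝ) (β : ℝ) (π : Y → ℝ) (y : Y) : ℝ :=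
  β * Real.log (π y / πref y)

noncomputable def partitionFn (πref : Y → ℝ) (β : ℝ) (r : Y → ℝ) : ℝ :=
  ∑ y, πref y * Real.exp (r y / β)

noncomputable def gibbsPolicy (πref : Y → ℝ) (β : ℝ) (r : Y → ℝ) (y : Y) : ℝ :=
  πref y * Real.exp (r y / β) / partitionFn πref β r

variable {πref : Y → ℝ} {β : ℝ}

lemma partitionFn_pos [Nonempty Y] (hπref : ∀ y, 0 < πref y) (r : Y → ℝ) :
    0 < partitionFn πref β r :=
  Finset.sum_pos (fun y _ => mul_pos (hπref y) (Real.exp_pos _)) Finset.univ_nonempty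

lemma gibbsPolicy_pos [Nonempty Y] (hπref : ∀ y, 0 < πref y) (r : Y → ℝ) (y : Y) :
    0 < gibbsPolicy πref β r y :=
  div_pos (mul_pos (hπref y) (Real.exp_pos _)) (partitionFn_pos hπref r)

lemma sum_gibbsPolicy [Nonempty Y] (hπref : ∀ y, 0 < πref y) (r : Y → ℝ) :
    ∑ y, gibbsPolicy πref β r y = 1 := by
  simp only [gibbsPolicy, ← Finset.sum_div]
  exact div_self (partitionFn_pos hπref r).ne'

lemma implicitReward_gibbsPolicy [Nonempty Y] (hπref : ∀ y, 0 < πref y) (hβ : β ≠ 0)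
    (r : Y → ℝ) :
    implicitReward πref β (gibbsPolicy πref β r) =
      fun y => r y - β * Real.log (partitionFn πref β r) := by
  funext y
  have hZ := (partitionFn_pos (β := β) hπref r).ne'
  have hratio : gibbsPolicy πref β r y / πref y = Real.exp (r y / β) / partitionFn πref β r := by
    unfold gibbsPolicy
    field_simp [(hπref y).ne']
  rw [implicitReward, hratio, Real.log_div (Real.exp_pos _).ne' hZ, Real.log_exp, mul_sub,
    mul_div_cancel₀ _ hβ]

lemma setOf_loss_implicitReward_eq_range [Nonempty Y] (hπref : ∀ y, 0 < πref y) (hβ : β ≠ 0)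
    {L : (Y → ℝ) → ℝ} (hL : ∀ r c, L (fun y => r y - c) = L r) :
    {v | ∃ π : Y → ℝ, (∀ y, 0 < π y) ∧ ∑ y, π y = 1 ∧ L (implicitReward πref β π) = v} =
      Set.range L := by
  ext v
  constructor
  · rintro ⟨π, -, -, rfl⟩
    exact ⟨_, rfl⟩
  · rintro ⟨r, rfl⟩
    refine ⟨gibbsPolicy πref β r, gibbsPolicy_pos hπref r, sum_gibbsPolicy hπref r, ?_⟩
    rw [implicitReward_gibbsPolicy hπref hβ, hL]

end DPO

open DPO in
theorem stmt_4_general {Y : Type*} [Fintype Y] [Nonempty Y]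
    (πref : Y → ℝ) (href_pos : ∀ y, 0 < πref y)
    (β : ℝ) (hβ : 0 < β)
    (D : Multiset (Y × Y))
    (σ : ℝ → ℝ)
    (LR : (Y → ℝ) → ℝ)
    (hLR : ∀ r : Y → ℝ, LR r = -(D.map (fun p => Real.log (σ (r p.1 - r p.2)))).sum)
    (LDPO : (Y → ℝ) → ℝ)
    (hLDPO : ∀ π : Y → ℝ, LDPO π = -(D.map (fun p => Real.log (σ
        (β * Real.log (π p.1 / πref p.1) - β * Real.log (π p.2 / πref p.2))))).sum) :
    sInf {v : ℝ | ∃ π : Y → ℝ, (∀ y, 0 < π y) ∧ (∑ y, π y = 1) ∧ LDPO π = v}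
      = sInf {v : ℝ | ∃ r : Y → ℝ, LR r = v} := by
  have hDPO : ∀ π, LDPO π = LR (implicitReward πref β π) := fun π => by
    rw [hLDPO, hLR]; rfl
  have hshift : ∀ r c, LR (fun y => r y - c) = LR r := fun r c => by
    simp only [hLR, sub_sub_sub_cancel_right]
  simp_rw [hDPO]
  rw [setOf_loss_implicitReward_eq_range href_pos hβ.ne' hshift]
  rfl

/-- The infimum of the DPO loss over fully supported policies equals the infimum of the
Bradley–Terry reward loss over all reward functions. -/
theorem stmt_4 {Y : Type*} [Fintype Y] [Nonempty Y]
    (πref : Y → ℝ) (href_pos : ∀ y, 0 < πref y) (href_sum : ∑ y, πref y = 1)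
    (β : ℝ) (hβ : 0 < β)
    (D : Multiset (Y × Y))
    (σ : ℝ → ℝ) (hσ : ∀ x, σ x = 1 / (1 + Real.exp (-x)))
    (LR : (Y → ℝ) → ℝ)
    (hLR : ∀ r : Y → ℝ, LR r = -(D.map (fun p => Real.log (σ (r p.1 - r p.2)))).sum)
    (LDPO : (Y → ℝ) → ℝ)
    (hLDPO : ∀ π : Y → ℝ, LDPO π = -(D.map (fun p => Real.log (σ
        (β * Real.log (π p.1 / πref p.1) - β * Real.log (π p.2 / πref p.2))))).sum) :
    sInf {v : ℝ | ∃ π : Y → ℝ, (∀ y, 0 < π y) ∧ (∑ y, π y = 1) ∧ LDPO π = v}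
      = sInf {v : ℝ | ∃ r : Y → ℝ, LR r = v} :=
  stmt_4_general πref href_pos β hβ D σ LR hLR LDPO hLDPO
end

section
/- Let Y be a finite set, π_ref fully supported, β > 0, D a finite preference multiset. Suppose r* : Y → ℝ minimizes L_R over all reward functions, and define π_PPO(y) = π_ref(y)·exp(r*(y)/β)/Z. Then π_PPO minimizes L_DPO over all fully supported policies. -/
/-!
The DPO loss of a policy `π` is the Bradley–Terry loss of its implied reward
`β · log (π / π_ref)`, so `L_DPO π = L_R (β · log (π / π_ref)) ≥ L_R r*`. The Gibbs policy
`π_PPO ∝ π_ref · exp (r* / β)` has implied reward `r* - β · log Z`, and the Bradley–Terry loss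
only sees reward differences, so `L_DPO π_PPO = L_R r*`.
-/

open Finset

noncomputable section

variable {Y : Type*}

def bradleyTerryLoss (σ : ℝ → ℝ) (D : Multiset (Y × Y)) (r : Y → ℝ) : ℝ :=
  -(D.map fun p => Real.log (σ (r p.1 - r p.2))).sum

theorem bradleyTerryLoss_sub_const (σ : ℝ → ℝ) (D : Multiset (Y × Y)) (r : Y → ℝ) (c : ℝ) :
    bradleyTerryLoss σ D (fun y => r y - c) = bradleyTerryLoss σ D r := by
  simp only [bradleyTerryLoss, sub_sub_sub_cancel_right]

def impliedReward (πref : Y → ℝ) (β : ℝ) (π : Y → ℝ) (y : Y) : ℝ :=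
  β * Real.log (π y / πref y)

section Gibbs

variable [Fintype Y]

def gibbsPartition (πref : Y → ℝ) (β : ℝ) (r : Y → ℝ) : ℝ :=
  ∑ y, πref y * Real.exp (r y / β)

def gibbsPolicy (πref : Y → ℝ) (β : ℝ) (r : Y → ℝ) (y : Y) : ℝ :=
  πref y * Real.exp (r y / β) / gibbsPartition πref β r

variable [Nonempty Y] {πref : Y → ℝ}

theorem gibbsPartition_pos (hπref : ∀ y, 0 < πref y) (β : ℝ) (r : Y → ℝ) :
    0 < gibbsPartition πref β r :=
  sum_pos (fun y _ => mul_pos (hπref y) (Real.exp_pos _)) univ_nonempty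

theorem gibbsPolicy_pos (hπref : ∀ y, 0 < πref y) (β : ℝ) (r : Y → ℝ) (y : Y) :
    0 < gibbsPolicy πref β r y :=
  div_pos (mul_pos (hπref y) (Real.exp_pos _)) (gibbsPartition_pos hπref β r)

theorem sum_gibbsPolicy (hπref : ∀ y, 0 < πref y) (β : ℝ) (r : Y → ℝ) :
    ∑ y, gibbsPolicy πref β r y = 1 := by
  simp only [gibbsPolicy]
  rw [← sum_div]
  exact div_self (gibbsPartition_pos hπref β r).ne'

theorem impliedReward_gibbsPolicy (hπref : ∀ y, 0 < πref y) (β : ℝ) (r : Y → ℝ)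
    (hβ : β ≠ 0) :
    impliedReward πref β (gibbsPolicy πref β r) =
      fun y => r y - β * Real.log (gibbsPartition πref β r) := by
  funext y
  rw [impliedReward, gibbsPolicy, div_right_comm, mul_div_cancel_left₀ _ (hπref y).ne',
    Real.log_div (Real.exp_ne_zero _) (gibbsPartition_pos hπref β r).ne', Real.log_exp]
  field_simp

end Gibbs

end

theorem stmt_5_general {Y : Type*} [Fintype Y] [Nonempty Y]
    (πref : Y → ℝ) (href_pos : ∀ y, 0 < πref y)
    (β : ℝ) (hβ : 0 < β)
    (D : Multiset (Y × Y))
    (σ : ℝ → ℝ)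
    (LR : (Y → ℝ) → ℝ)
    (hLR : ∀ r : Y → ℝ, LR r = -(D.map (fun p => Real.log (σ (r p.1 - r p.2)))).sum)
    (LDPO : (Y → ℝ) → ℝ)
    (hLDPO : ∀ π : Y → ℝ, LDPO π = -(D.map (fun p => Real.log (σ
        (β * Real.log (π p.1 / πref p.1) - β * Real.log (π p.2 / πref p.2))))).sum)
    (rstar : Y → ℝ) (hrstar : ∀ r : Y → ℝ, LR rstar ≤ LR r)
    (Z : ℝ) (hZ : Z = ∑ y, πref y * Real.exp (rstar y / β))
    (πPPO : Y → ℝ) (hπPPO : ∀ y, πPPO y = πref y * Real.exp (rstar y / β) / Z) :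
    (∀ y, 0 < πPPO y) ∧ (∑ y, πPPO y = 1) ∧
    (∀ π : Y → ℝ, (∀ y, 0 < π y) → (∑ y, π y = 1) → LDPO πPPO ≤ LDPO π) := by
  obtain rfl : LR = bradleyTerryLoss σ D := funext hLR
  obtain rfl : LDPO = fun π => bradleyTerryLoss σ D (impliedReward πref β π) := funext hLDPO
  obtain rfl : πPPO = gibbsPolicy πref β rstar := funext fun y => by rw [hπPPO, hZ]; rfl
  refine ⟨gibbsPolicy_pos href_pos β rstar, sum_gibbsPolicy href_pos β rstar, fun π _ _ => ?_⟩
  calc bradleyTerryLoss σ D (impliedReward πref β (gibbsPolicy πref β rstar))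
      = bradleyTerryLoss σ D rstar := by
        rw [impliedReward_gibbsPolicy href_pos β rstar hβ.ne', bradleyTerryLoss_sub_const]
    _ ≤ bradleyTerryLoss σ D (impliedReward πref β π) := hrstar _

/-- Inclusion Π_PPO ⊆ Π_DPO: if `r*` minimizes the Bradley–Terry loss and
`π_PPO(y) = π_ref(y)·exp(r*(y)/β)/Z`, then `π_PPO` is a fully supported policy that
minimizes the DPO loss over all fully supported policies. -/
theorem stmt_5 {Y : Type*} [Fintype Y] [Nonempty Y]
    (πref : Y → ℝ) (href_pos : ∀ y, 0 < πref y) (href_sum : ∑ y, πref y = 1)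
    (β : ℝ) (hβ : 0 < β)
    (D : Multiset (Y × Y))
    (σ : ℝ → ℝ) (hσ : ∀ x, σ x = 1 / (1 + Real.exp (-x)))
    (LR : (Y → ℝ) → ℝ)
    (hLR : ∀ r : Y → ℝ, LR r = -(D.map (fun p => Real.log (σ (r p.1 - r p.2)))).sum)
    (LDPO : (Y → ℝ) → ℝ)
    (hLDPO : ∀ π : Y → ℝ, LDPO π = -(D.map (fun p => Real.log (σ
        (β * Real.log (π p.1 / πref p.1) - β * Real.log (π p.2 / πref p.2))))).sum)
    (rstar : Y → ℝ) (hrstar : ∀ r : Y → ℝ, LR rstar ≤ LR r)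
    (Z : ℝ) (hZ : Z = ∑ y, πref y * Real.exp (rstar y / β))
    (πPPO : Y → ℝ) (hπPPO : ∀ y, πPPO y = πref y * Real.exp (rstar y / β) / Z) :
    (∀ y, 0 < πPPO y) ∧ (∑ y, πPPO y = 1) ∧
    (∀ π : Y → ℝ, (∀ y, 0 < π y) → (∑ y, π y = 1) → LDPO πPPO ≤ LDPO π) :=
  stmt_5_general πref href_pos β hβ D σ LR hLR LDPO hLDPO rstar hrstar Z hZ πPPO hπPPO
end

section
/- In the setting Y = {y₁, y₂, y₃}, π_ref = (1/2, 1/2, 0), β > 0, single preference pair (y₁ ≻ y₂): the policy π_DPO = (0.1, 0, 0.9) attains the infimum (value 0) of the DPO loss, yet π_DPO is not of the form π(y) ∝ π_ref(y)·exp(r(y)/β) for any reward r, because any such policy assigns probability 0 to y₃ while π_DPO(y₃) = 0.9 > 0. Hence there exists a minimizer of the DPO loss that is not a PPO solution. -/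
namespace Real

lemma log_one_add_rpow_nonneg {x : ℝ} (hx : 0 ≤ x) (β : ℝ) : 0 ≤ log (1 + x ^ β) :=
  log_nonneg (by linarith [rpow_nonneg hx β])

lemma log_one_add_zero_rpow {β : ℝ} (hβ : β ≠ 0) : log (1 + (0 : ℝ) ^ β) = 0 := by
  simp [zero_rpow hβ]

end Real

/-- Counter-example: with `Y = {y₁,y₂,y₃}`, `π_ref = (1/2,1/2,0)`, single pair `y₁ ≻ y₂`,
the policy `π_DPO = (0.1, 0, 0.9)` attains the infimum (value 0) of the DPO loss
`L(π) = log(1 + (π(y₂)/π(y₁))^β)`, yet it is not of the PPO form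
`π(y) ∝ π_ref(y)·exp(r(y)/β)` for any reward `r` (any such policy assigns probability 0
to `y₃`, while `π_DPO(y₃) = 0.9 > 0`). Hence some DPO minimizer is not a PPO solution. -/
theorem stmt_7 (β : ℝ) (hβ : 0 < β)
    (πref : Fin 3 → ℝ) (hπref : πref = ![1/2, 1/2, 0])
    (L : (Fin 3 → ℝ) → ℝ)
    (hL : ∀ π : Fin 3 → ℝ, L π = Real.log (1 + (π 1 / π 0) ^ β))
    (πDPO : Fin 3 → ℝ) (hπDPO : πDPO = ![0.1, 0, 0.9]) :
    L πDPO = 0 ∧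
    (∀ π : Fin 3 → ℝ, (∀ y, 0 ≤ π y) → (∑ y, π y = 1) → 0 ≤ L π) ∧
    (∀ r : Fin 3 → ℝ, ∀ Z : ℝ, 0 < Z →
      ¬ (∀ y, πDPO y = πref y * Real.exp (r y / β) / Z)) := by
  refine ⟨?_, ?_, ?_⟩
  · simpa [hL, hπDPO] using Real.log_one_add_zero_rpow hβ.ne'
  · intro π hπ _
    rw [hL]
    exact Real.log_one_add_rpow_nonneg (div_nonneg (hπ 1) (hπ 0)) β
  · intro r Z _ hPPO
    have hy₃ : (0.9 : ℝ) = 0 * Real.exp (r 2 / β) / Z := by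
      simpa [hπDPO, hπref] using hPPO 2
    norm_num at hy₃
end

section
/- Let Y be finite, let D be a finite preference multiset such that the comparison graph on Y (with an edge y_w → y_l for each pair in D) is acyclic and nonempty. Then inf_r L_R(r) over r : Y → ℝ equals 0, but the infimum is not attained (L_R(r) > 0 for every r). -/
/-!
Rewriting `-log σ(x)` as `log (1 + exp (-x))` shows every term of the loss is positive, so the
loss is positive. Acyclicity gives a rank `g : Y → ℕ` that strictly decreases along every
preference edge; along the rewards `t • g` every reward gap grows linearly in `t`, so each term tends
to `0` as `t → ∞`, and so does the loss.
-/

open Filter Topology Real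

lemma neg_log_one_div_one_add_exp_neg (x : ℝ) :
    -log (1 / (1 + exp (-x))) = log (1 + exp (-x)) := by
  rw [one_div, log_inv, neg_neg]

lemma log_one_add_exp_neg_pos (x : ℝ) : 0 < log (1 + exp (-x)) :=
  log_pos (lt_add_of_pos_right 1 (exp_pos _))

lemma tendsto_log_one_add_exp_neg_atTop :
    Tendsto (fun x => log (1 + exp (-x))) atTop (𝓝 0) := by
  have h : Tendsto (fun x => 1 + exp (-x)) atTop (𝓝 1) := by
    simpa using (tendsto_exp_neg_atTop_nhds_zero).const_add 1
  simpa using h.log one_ne_zero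

namespace Relation

lemma exists_rank_lt_of_acyclic {α : Type*} [Fintype α] {r : α → α → Prop}
    (h : ∀ a, ¬ TransGen r a a) : ∃ g : α → ℕ, ∀ a b, r a b → g b < g a := by
  classical
  refine ⟨fun a => (Finset.univ.filter (TransGen r a)).card, fun a b hab => ?_⟩
  refine Finset.card_lt_card ((Finset.ssubset_iff_of_subset ?_).mpr ⟨b, ?_, ?_⟩)
  · intro c hc
    simp only [Finset.mem_filter, Finset.mem_univ, true_and] at hc ⊢
    exact TransGen.head hab hc
  · simpa using TransGen.single hab
  · simpa using h b

end Relation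

/-- If the comparison graph of a nonempty finite preference multiset is acyclic, then
the infimum of the Bradley–Terry loss over all rewards is `0`, but it is not attained:
`L_R(r) > 0` for every `r`. -/
theorem stmt_13 {Y : Type*} [Fintype Y]
    (D : Multiset (Y × Y)) (hD_ne : D ≠ 0)
    (hacyclic : ∀ y : Y, ¬ Relation.TransGen (fun a b => (a, b) ∈ D) y y)
    (σ : ℝ → ℝ) (hσ : ∀ x, σ x = 1 / (1 + Real.exp (-x)))
    (LR : (Y → ℝ) → ℝ)
    (hLR : ∀ r : Y → ℝ, LR r = -(D.map (fun p => Real.log (σ (r p.1 - r p.2)))).sum) :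
    IsGLB {v : ℝ | ∃ r : Y → ℝ, LR r = v} 0 ∧ (∀ r : Y → ℝ, 0 < LR r) := by
  have hLR' (r : Y → ℝ) : LR r = (D.map fun p => log (1 + exp (-(r p.1 - r p.2)))).sum := by
    simp only [hLR, hσ, ← Multiset.sum_map_neg, neg_log_one_div_one_add_exp_neg]
  have hpos (r : Y → ℝ) : 0 < LR r := by
    simpa [hLR'] using Multiset.sum_lt_sum_of_nonempty (f := fun _ => (0 : ℝ)) hD_ne
      (fun p _ => log_one_add_exp_neg_pos (r p.1 - r p.2))
  obtain ⟨g, hg⟩ := Relation.exists_rank_lt_of_acyclic hacyclic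
  have hscale : Tendsto (fun t : ℝ => LR (fun y => t * g y)) atTop (𝓝 0) := by
    have hterm : ∀ p ∈ D,
        Tendsto (fun t : ℝ => log (1 + exp (-(t * g p.1 - t * g p.2)))) atTop (𝓝 0) := by
      intro p hp
      have hgap : (0 : ℝ) < g p.1 - g p.2 := sub_pos.mpr (Nat.cast_lt.mpr (hg p.1 p.2 hp))
      simp only [← mul_sub]
      exact tendsto_log_one_add_exp_neg_atTop.comp (tendsto_id.atTop_mul_const hgap)
    simp only [hLR']
    simpa only [Multiset.map_const', smul_zero, Multiset.sum_replicate] using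
      tendsto_multiset_sum D hterm
  refine ⟨isGLB_of_mem_closure ?_ ?_, hpos⟩
  · rintro v ⟨r, rfl⟩
    exact (hpos r).le
  · exact mem_closure_of_tendsto hscale (Eventually.of_forall fun t => ⟨_, rfl⟩)
end
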